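/- For every graph G on m vertices and every fixed width-coupling bipartite graph C (a set of ordered pairs in {1,...,m}²), the number of proper c-colorings of the layered graph M_n(G,C) satisfies a linear recurrence in n with coefficients that are polynomials in c, of order at most the Bell number B_m. -/

import Mathlib

/-- Number of proper `c`-colorings of the layered graph `M_n(G,C)`:
`n` layers of `m` vertices, edges within each layer mimicking `G`, and an edge
from `(α,i)` to `(β,i+1)` for each `(α,β) ∈ C`. -/
def layeredColorings {m : ℕ} (G : SimpleGraph (Fin m)) [DecidableRel G.Adj]
    (C : Finset (Fin m × Fin m)) (n c : ℕ) : ℕ :=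
  Fintype.card {f : Fin m × Fin n → Fin c //
    (∀ i : Fin n, ∀ α β, G.Adj α β → f (α, i) ≠ f (β, i)) ∧
    (∀ i : Fin n, ∀ h : (i : ℕ) + 1 < n, ∀ e ∈ C,
      f (e.1, i) ≠ f (e.2, ⟨(i : ℕ) + 1, h⟩))}

/-- The `m`-th Bell number: the number of set partitions of an `m`-element set. -/
def bellNumber (m : ℕ) : ℕ :=
  Fintype.card (Finpartition (Finset.univ : Finset (Fin m)))

/-!
Record, for the colourings of the first `n` layers, only the kernel partition of the top layer.
The number of ways to add a layer with a prescribed kernel `q` on top of a layer with kernel `p`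
is a polynomial in `c` that depends on `q` and `p` alone: the new layer is an injective colouring
of the classes of `q`, forbidden (through `C`) from some of the `|p|` colours used by the previous
layer. So the vector of these counts evolves by a fixed matrix of polynomials indexed by set
partitions, and Cayley–Hamilton turns that into a recurrence of order the number of partitions.
-/

open Polynomial Finset Matrix Function

theorem Matrix.pow_card_eq_neg_sum_charpoly_coeff {R ι : Type*} [CommRing R] [Nontrivial R]
    [Fintype ι] [DecidableEq ι] (A : Matrix ι ι R) :
    A ^ Fintype.card ι = -∑ j : Fin (Fintype.card ι), A.charpoly.coeff j • A ^ (j : ℕ) := by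
  have h := A.aeval_self_charpoly
  rw [A.charpoly_monic.as_sum, A.charpoly_natDegree_eq_dim] at h
  simp only [map_add, map_pow, aeval_X, map_sum, map_mul, aeval_C, Algebra.algebraMap_eq_smul_one,
    smul_mul_assoc, one_mul] at h
  rw [Fin.sum_univ_eq_sum_range (fun j => A.charpoly.coeff j • A ^ j)]
  exact eq_neg_of_add_eq_zero_left h

theorem Matrix.dotProduct_pow_mulVec_recurrence {R ι : Type*} [CommRing R] [Nontrivial R]
    [Fintype ι] [DecidableEq ι] (A : Matrix ι ι R) (v w : ι → R) (n : ℕ) :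
    w ⬝ᵥ (A ^ (n + Fintype.card ι) *ᵥ v) =
      ∑ j : Fin (Fintype.card ι), -A.charpoly.coeff j * w ⬝ᵥ (A ^ (n + j) *ᵥ v) := by
  rw [pow_add, A.pow_card_eq_neg_sum_charpoly_coeff]
  simp only [Matrix.mul_neg, Matrix.mul_sum, Matrix.mul_smul, ← pow_add, Matrix.neg_mulVec,
    Matrix.sum_mulVec, Matrix.smul_mulVec, dotProduct_neg, dotProduct_sum, dotProduct_smul,
    smul_eq_mul, neg_mul, Finset.sum_neg_distrib]

section RelWalk

variable {X ι : Type*} (P : X → Prop) (R : X → X → Prop)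

abbrev RelWalk (n : ℕ) : Type _ :=
  {x : Fin (n + 1) → X // (∀ i, P (x i)) ∧ ∀ i : Fin n, R (x i.castSucc) (x i.succ)}

def RelWalk.snocEquiv (Q : X → Prop) (n : ℕ) :
    {x : RelWalk P R (n + 1) // Q (x.1 (Fin.last _))} ≃
      Σ x : RelWalk P R n, {y : X // (P y ∧ R (x.1 (Fin.last n)) y) ∧ Q y} where
  toFun x := ⟨⟨Fin.init x.1.1, fun i => x.1.2.1 _, fun i => x.1.2.2 i.castSucc⟩,
    ⟨x.1.1 (Fin.last _), ⟨x.1.2.1 _, x.1.2.2 (Fin.last n)⟩, x.2⟩⟩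
  invFun x := ⟨⟨Fin.snoc x.1.1 x.2.1, by
    refine ⟨Fin.lastCases ?_ fun i => ?_, Fin.lastCases ?_ fun i => ?_⟩
    · simpa using x.2.2.1.1
    · simpa using x.1.2.1 i
    · simpa using x.2.2.1.2
    · rw [Fin.succ_castSucc, Fin.snoc_castSucc, Fin.snoc_castSucc]
      exact x.1.2.2 i⟩, by simpa using x.2.2.2⟩
  left_inv x := Subtype.ext (Subtype.ext (Fin.snoc_init_self x.1.1))
  right_inv x := Sigma.subtype_ext (Subtype.ext (by simp)) (by simp)

variable [Finite X] [Fintype ι] (κ : X → ι)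

noncomputable def RelWalk.endCount (n : ℕ) (q : ι) : ℕ :=
  Nat.card {x : RelWalk P R n // κ (x.1 (Fin.last n)) = q}

theorem RelWalk.natCard_eq_sum_endCount (n : ℕ) :
    Nat.card (RelWalk P R n) = ∑ q, endCount P R κ n q := by
  have := Fintype.ofFinite (RelWalk P R n)
  rw [Nat.card_congr (Equiv.sigmaFiberEquiv fun x : RelWalk P R n => κ (x.1 (Fin.last n))).symm,
    Nat.card_sigma]
  rfl

variable (A : Matrix ι ι ℤ)
  (hA : ∀ z q, (Nat.card {y // (P y ∧ R z y) ∧ κ y = q} : ℤ) = A q (κ z))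
include hA

theorem RelWalk.endCount_succ (n : ℕ) :
    (fun q => (endCount P R κ (n + 1) q : ℤ)) = A *ᵥ fun q => (endCount P R κ n q : ℤ) := by
  classical
  have := Fintype.ofFinite X
  ext q
  calc (endCount P R κ (n + 1) q : ℤ)
      = ∑ x : RelWalk P R n, A q (κ (x.1 (Fin.last n))) := by
        rw [endCount, Nat.card_congr (snocEquiv P R (κ · = q) n), Nat.card_sigma]
        push_cast
        simp only [hA]
    _ = ∑ p, A q p * endCount P R κ n p := by
        rw [← Fintype.sum_fiberwise (fun x : RelWalk P R n => κ (x.1 (Fin.last n)))]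
        refine Finset.sum_congr rfl fun p _ => ?_
        rw [Finset.sum_congr rfl fun x _ => congrArg (A q) x.2]
        simp [endCount, Nat.card_eq_fintype_card, mul_comm]

theorem RelWalk.natCard_eq_dotProduct_pow_mulVec [DecidableEq ι] (n : ℕ) :
    (Nat.card (RelWalk P R n) : ℤ) = 1 ⬝ᵥ (A ^ n *ᵥ fun q => (endCount P R κ 0 q : ℤ)) := by
  have hpow :
      (fun q => (endCount P R κ n q : ℤ)) = A ^ n *ᵥ fun q => (endCount P R κ 0 q : ℤ) := by
    induction n with
    | zero => simp
    | succ n ih => rw [endCount_succ P R κ A hA, ih, mulVec_mulVec, pow_succ']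
  rw [← hpow, one_dotProduct, natCard_eq_sum_endCount P R κ]
  push_cast
  rfl

end RelWalk

section AvoidingInjections

variable {α β γ : Type*} [Fintype α] [Fintype β] [Fintype γ] (F : α → Finset γ) (e : γ ↪ β)

theorem natCard_injective_avoiding_fiber (S : Finset α) :
    Nat.card {h : α → β //
        (Injective h ∧ ∀ a, ∀ s ∈ F a, h a ≠ e s) ∧ ∀ a, (h a ∈ univ.map e ↔ a ∈ S)} =
      Nat.card {ψ : S → γ // Injective ψ ∧ ∀ a : S, ψ a ∉ F a} *
        (Fintype.card β - Fintype.card γ).descFactorial (Fintype.card α - #S) := by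
  classical
  set Rng := univ.map e
  have hRng : Fintype.card {b // b ∉ Rng} = Fintype.card β - Fintype.card γ := by
    rw [Fintype.card_subtype_compl, Fintype.card_coe, card_map, card_univ]
  have hS : Fintype.card {a // a ∉ S} = Fintype.card α - #S := by
    rw [Fintype.card_subtype_compl, Fintype.card_coe]
  rw [← hRng, ← hS, ← Fintype.card_embedding_eq, ← Nat.card_eq_fintype_card, ← Nat.card_prod]
  let glue (ψ : S → γ) (τ : {a // a ∉ S} ↪ {b // b ∉ Rng}) (a : α) : β :=
    if ha : a ∈ S then e (ψ ⟨a, ha⟩) else τ ⟨a, ha⟩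
  have glue_mem (ψ τ a) : glue ψ τ a ∈ Rng ↔ a ∈ S := by
    by_cases ha : a ∈ S
    · simp [glue, ha, Rng]
    · simpa [glue, ha] using (τ ⟨a, ha⟩).2
  symm
  refine Nat.card_eq_of_bijective (f := fun x => ⟨glue x.1.1 x.2, ⟨?inj, ?avoid⟩, glue_mem _ _⟩)
    ⟨?_, ?_⟩
  case inj =>
    intro a₁ a₂ h
    by_cases h₁ : a₁ ∈ S <;> by_cases h₂ : a₂ ∈ S
    · simpa [glue, h₁, h₂, x.1.2.1.eq_iff] using h
    · exact absurd ((glue_mem _ _ _).2 h₁) (h ▸ (glue_mem x.1.1 x.2 a₂).not.2 h₂)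
    · exact absurd ((glue_mem _ _ _).2 h₂) (h ▸ (glue_mem x.1.1 x.2 a₁).not.2 h₁)
    · have := x.2.injective (Subtype.ext (by simpa [glue, h₁, h₂] using h))
      simpa using this
  case avoid =>
    intro a s hs
    by_cases ha : a ∈ S
    · simpa [glue, ha] using fun h : x.1.1 ⟨a, ha⟩ = s => x.1.2.2 ⟨a, ha⟩ (h ▸ hs)
    · intro h
      exact (glue_mem x.1.1 x.2 a).not.2 ha (h ▸ mem_map_of_mem e (mem_univ s))
  · rintro ⟨⟨ψ₁, _⟩, τ₁⟩ ⟨⟨ψ₂, _⟩, τ₂⟩ h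
    have h' (a) : glue ψ₁ τ₁ a = glue ψ₂ τ₂ a := congrFun (congrArg Subtype.val h) a
    refine Prod.ext (Subtype.ext (funext fun a => e.injective ?_)) (Embedding.ext fun a => ?_)
    · simpa [glue, a.2] using h' a
    · simpa [glue, a.2, Subtype.ext_iff] using h' a
  · rintro ⟨h, ⟨hinj, havoid⟩, hfib⟩
    choose ψ hψ using fun a : S => by simpa [Rng] using (hfib a).2 a.2
    have hψinj : Injective ψ := fun a₁ a₂ h₁₂ =>
      Subtype.ext (hinj (by rw [← hψ, ← hψ, h₁₂]))
    let τ : {a // a ∉ S} ↪ {b // b ∉ Rng} :=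
      ⟨fun a => ⟨h a, mt (hfib a).1 a.2⟩, fun a₁ a₂ h₁₂ =>
        Subtype.ext (hinj (congrArg Subtype.val h₁₂))⟩
    refine ⟨⟨⟨ψ, hψinj, fun a ha => havoid a _ ha (hψ a).symm⟩, τ⟩,
      Subtype.ext (funext fun a => ?_)⟩
    by_cases ha : a ∈ S
    · simp [glue, ha, hψ]
    · simp only [glue, ha, dite_false]; rfl

variable (α γ) in
/-- In `natCard_injective_avoiding_eq_eval`, `S` is the set of points sent into the range of `e`;
the other points go injectively to the `|β| - |γ|` remaining values. -/
noncomputable def avoidingInjectionsPoly : ℤ[X] :=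
  ∑ S : Finset α, (Nat.card {ψ : S → γ // Injective ψ ∧ ∀ a : S, ψ a ∉ F a} : ℤ[X]) *
    (descPochhammer ℤ (Fintype.card α - #S)).comp (X - C (Fintype.card γ : ℤ))

theorem natCard_injective_avoiding_eq_eval :
    (Nat.card {h : α → β // Injective h ∧ ∀ a, ∀ s ∈ F a, h a ≠ e s} : ℤ) =
      (avoidingInjectionsPoly α γ F).eval (Fintype.card β : ℤ) := by
  classical
  let fib (h : α → β) : Finset α := univ.filter fun a => h a ∈ univ.map e
  have hfib (S : Finset α) : Nat.card
      {h : {h : α → β // Injective h ∧ ∀ a, ∀ s ∈ F a, h a ≠ e s} // fib h.1 = S} =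
      Nat.card {h : α → β //
        (Injective h ∧ ∀ a, ∀ s ∈ F a, h a ≠ e s) ∧ ∀ a, (h a ∈ univ.map e ↔ a ∈ S)} :=
    Nat.card_congr <| (Equiv.subtypeSubtypeEquivSubtypeInter _ (fib · = S)).trans <|
      Equiv.subtypeEquivRight fun h => and_congr_right fun _ => by simp [fib, Finset.ext_iff]
  have hγβ : Fintype.card γ ≤ Fintype.card β := Fintype.card_le_of_embedding e
  rw [Nat.card_congr (Equiv.sigmaFiberEquiv fun h => fib h.1).symm, Nat.card_sigma,
    avoidingInjectionsPoly, eval_finsetSum]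
  push_cast
  refine Finset.sum_congr rfl fun S _ => ?_
  rw [hfib, natCard_injective_avoiding_fiber]
  simp [eval_comp, ← Nat.cast_sub hγβ, descPochhammer_eval_eq_descFactorial]

end AvoidingInjections

theorem Setoid.natCard_ker_eq {α β : Type*} (r : Setoid α) (Q : (α → β) → Prop) :
    Nat.card {g : α → β // Q g ∧ Setoid.ker g = r} =
      Nat.card {h : Quotient r → β // Injective h ∧ Q (h ∘ Quotient.mk r)} :=
  Nat.card_congr
    { toFun g := ⟨Quotient.lift g.1 g.2.2.ge, (Setoid.lift_injective_iff_ker_eq_of_le _).2 g.2.2,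
        g.2.1⟩
      invFun h := ⟨h.1 ∘ Quotient.mk r, h.2.2, Setoid.ext fun a b => by
        simp [Setoid.ker_def, h.2.1.eq_iff, Quotient.eq]⟩
      left_inv g := rfl
      right_inv h := Subtype.ext (funext (Quotient.ind fun _ => rfl)) }

instance Setoid.instFinite {α : Type*} [Finite α] : Finite (Setoid α) :=
  Finite.of_injective _ fun _ _ => Setoid.eq_iff_rel_eq.2

theorem Setoid.natCard_le_bellNumber (m : ℕ) : Nat.card (Setoid (Fin m)) ≤ bellNumber m := by
  classical
  have := Fintype.ofFinite (Setoid (Fin m))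
  rw [Nat.card_eq_fintype_card, bellNumber]
  refine Fintype.card_le_of_injective (fun r => Finpartition.ofSetoid r) fun r s h => ?_
  ext a b
  rw [← Finpartition.mem_part_ofSetoid_iff_rel, ← Finpartition.mem_part_ofSetoid_iff_rel]
  rw [show Finpartition.ofSetoid r = Finpartition.ofSetoid s from h]

section Layers

variable {V β : Type*} [Fintype V] [Fintype β] (G : SimpleGraph V) (C : Finset (V × V))

def SimpleGraph.IsProperColoring (g : V → β) : Prop := ∀ a b, G.Adj a b → g a ≠ g b

def IsCoupledLayer (f g : V → β) : Prop := ∀ e ∈ C, f e.1 ≠ g e.2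

open scoped Classical in
/-- Row `q` is the kernel of the new layer, column `p` that of the layer below it. -/
noncomputable def transferMatrix : Matrix (Setoid V) (Setoid V) ℤ[X] := fun q p =>
  if ∀ a b, G.Adj a b → ¬ q a b then
    avoidingInjectionsPoly (Quotient q) (Quotient p)
      fun t => (C.filter fun e => Quotient.mk q e.2 = t).image fun e => Quotient.mk p e.1
  else 0

theorem natCard_nextLayer_eq_eval (f : V → β) (q : Setoid V) :
    (Nat.card {g : V → β // (G.IsProperColoring g ∧ IsCoupledLayer C f g) ∧ Setoid.ker g = q} :
      ℤ) =
      (transferMatrix G C q (Setoid.ker f)).eval (Fintype.card β : ℤ) := by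
  classical
  rw [Setoid.natCard_ker_eq, transferMatrix]
  split_ifs with hq
  · rw [← natCard_injective_avoiding_eq_eval _ ⟨Setoid.kerLift f, Setoid.kerLift_injective f⟩]
    refine congrArg _ <| Nat.card_congr <|
      Equiv.subtypeEquivRight fun h => and_congr_right fun hh => ?_
    have hproper : G.IsProperColoring (h ∘ Quotient.mk q) := fun a b hab hqab =>
      hq a b hab (Quotient.exact (hh hqab))
    simp only [hproper, IsCoupledLayer, true_and, mem_image, mem_filter, Prod.forall,
      Function.comp_apply]
    constructor
    · rintro hC _ _ ⟨⟨a, b⟩, ⟨hab, rfl⟩, rfl⟩ hfh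
      exact hC a b hab hfh.symm
    · exact fun hC a b hab hfh => hC _ _ ⟨(a, b), ⟨hab, rfl⟩, rfl⟩ hfh.symm
  · push Not at hq
    obtain ⟨a, b, hab, hqab⟩ := hq
    simp only [eval_zero, Nat.cast_eq_zero, Nat.card_eq_zero]
    left
    exact ⟨fun h => h.2.2.1 a b hab (congrArg h.1 (Quotient.sound hqab))⟩

end Layers

theorem layeredColorings_succ_eq_natCard_relWalk {m : ℕ} (G : SimpleGraph (Fin m))
    [DecidableRel G.Adj] (C : Finset (Fin m × Fin m)) (n c : ℕ) :
    layeredColorings G C (n + 1) c =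
      Nat.card (RelWalk (G.IsProperColoring (β := Fin c)) (IsCoupledLayer C) n) := by
  rw [layeredColorings, ← Nat.card_eq_fintype_card]
  exact Nat.card_congr
    { toFun f := ⟨fun i a => f.1 (a, i), f.2.1, fun i => f.2.2 i.castSucc i.succ.2⟩
      invFun x := ⟨fun z => x.1 z.2 z.1, x.2.1, fun i h => x.2.2 ⟨i, by omega⟩⟩
      left_inv _ := rfl
      right_inv _ := rfl }

/-- For every graph `G` on `m` vertices and coupling graph `C`, the sequence
`n ↦ P(M_n(G,C), c)` satisfies a linear recurrence (for `n ≥ 1`) of order at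
most the Bell number `B_m`, with coefficients that are polynomials in `c`,
uniformly in `c`. -/
theorem layered_colorings_linear_recurrence {m : ℕ} (G : SimpleGraph (Fin m))
    [DecidableRel G.Adj] (C : Finset (Fin m × Fin m)) :
    ∃ k : ℕ, 1 ≤ k ∧ k ≤ bellNumber m ∧ ∃ a : Fin k → Polynomial ℤ,
      ∀ c : ℕ, ∀ n : ℕ, 1 ≤ n →
        (layeredColorings G C (n + k) c : ℤ) =
          ∑ j : Fin k, (a j).eval (c : ℤ) * layeredColorings G C (n + j) c := by
  classical
  let _ : Fintype (Setoid (Fin m)) := Fintype.ofFinite _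
  refine ⟨Fintype.card (Setoid (Fin m)), Fintype.card_pos, ?_,
    fun j => -(transferMatrix G C).charpoly.coeff j, fun c n hn => ?_⟩
  · exact Nat.card_eq_fintype_card (α := Setoid (Fin m)) ▸ Setoid.natCard_le_bellNumber m
  obtain ⟨n, rfl⟩ := Nat.exists_eq_add_of_le' hn
  let A := (transferMatrix G C).map (evalRingHom (c : ℤ))
  have hA (f : Fin m → Fin c) (q : Setoid (Fin m)) :
      (Nat.card {g // (G.IsProperColoring g ∧ IsCoupledLayer C f g) ∧ Setoid.ker g = q} : ℤ) =
        A q (Setoid.ker f) := by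
    simpa [A] using natCard_nextLayer_eq_eval G C f q
  let v₀ (q : Setoid (Fin m)) : ℤ :=
    RelWalk.endCount (G.IsProperColoring (β := Fin c)) (IsCoupledLayer C) Setoid.ker 0 q
  have hcount (j : ℕ) : (layeredColorings G C (n + 1 + j) c : ℤ) = 1 ⬝ᵥ (A ^ (n + j) *ᵥ v₀) := by
    rw [add_right_comm, layeredColorings_succ_eq_natCard_relWalk,
      RelWalk.natCard_eq_dotProduct_pow_mulVec _ _ _ A hA]
  rw [hcount, A.dotProduct_pow_mulVec_recurrence, charpoly_map]
  simp only [hcount, coeff_map, coe_evalRingHom, eval_neg]
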